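/- arXiv:1604.07333 — 3 statements merged into one kernel-verified Lean document; each statement's English description precedes it below -/
import Mathlib

section
/- Let 𝔪 be a finite multiset of segments with width ω(𝔪) = k, and let Δ₁ ⊆ ⋯ ⊆ Δ_k be a maximal nested chain contained in 𝔪 (which exists by Dilworth's theorem). Let S = {Δ : Δᵢ ⪯' Δ for some 1 ≤ i ≤ k}. Set 𝔪₁ = the restriction of 𝔪 − (Δ₁+⋯+Δ_k) to S, and 𝔪₂ = the restriction of 𝔪 − (Δ₁+⋯+Δ_k) to the complement of S. Then for every segment Δ in the support of 𝔪 − 𝔪₂ and every Δ' in the support of 𝔪 − 𝔪₁, we have Δ ⊀ Δ'. -/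
/-- A segment is a pair of integers `(a,b)` with `a ≤ b`, viewed as the interval `[a,b] ⊆ ℤ`. -/
abbrev Seg : Type := {p : ℤ × ℤ // p.1 ≤ p.2}

/-- left endpoint -/
def segB (Δ : Seg) : ℤ := Δ.val.1
/-- right endpoint -/
def segE (Δ : Seg) : ℤ := Δ.val.2

/-- the relation `⪯'` -/
def SegLE (Δ₁ Δ₂ : Seg) : Prop := Δ₁ = Δ₂ ∨ (segB Δ₁ < segB Δ₂ ∧ segE Δ₁ < segE Δ₂)

/-- the relation `≺` ("precedes") -/
def SegPrec (Δ₁ Δ₂ : Seg) : Prop :=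
  segB Δ₁ ≤ segB Δ₂ - 1 ∧ segB Δ₂ - 1 ≤ segE Δ₁ ∧ segE Δ₁ < segE Δ₂

/-- containment `Δ₁ ⊆ Δ₂` -/
def SegSub (Δ₁ Δ₂ : Seg) : Prop := segB Δ₂ ≤ segB Δ₁ ∧ segE Δ₁ ≤ segE Δ₂

/-- a ladder multisegment -/
def IsLadder (m : Multiset Seg) : Prop :=
  ∃ l : List Seg, m = ↑l ∧ l.Chain' (fun Δ₁ Δ₂ => segB Δ₁ < segB Δ₂ ∧ segE Δ₁ < segE Δ₂)

/-- the width of a multisegment: the minimal number of ladder multisegments summing to it -/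
noncomputable def width (m : Multiset Seg) : ℕ :=
  sInf {k | ∃ L : List (Multiset Seg), L.length = k ∧ (∀ x ∈ L, IsLadder x) ∧ L.sum = m}

/-!
A segment `Δ` of `𝔪 - 𝔪₂` lies `⪯'`-above some member `Δᵢ` of the chain. If `Δ ≺ Δ'`, then `Δ'`
has both endpoints strictly to the right of those of `Δᵢ`, so `Δ'` lies in `S`; being in `𝔪 - 𝔪₁`,
it must then be a member of the chain. But two members of a nested chain are comparable under `⊆`,
which is incompatible with one being strictly shifted to the right of the other.
-/

/-- The strict part of `⪯'`. -/
def SegLT (Δ₁ Δ₂ : Seg) : Prop := segB Δ₁ < segB Δ₂ ∧ segE Δ₁ < segE Δ₂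

theorem SegPrec.segLT {Δ₁ Δ₂ : Seg} (h : SegPrec Δ₁ Δ₂) : SegLT Δ₁ Δ₂ :=
  ⟨by linarith [h.1], h.2.2⟩

theorem SegLE.trans_segLT {Δ₁ Δ₂ Δ₃ : Seg} (h₁₂ : SegLE Δ₁ Δ₂) (h₂₃ : SegLT Δ₂ Δ₃) :
    SegLT Δ₁ Δ₃ := by
  rcases h₁₂ with rfl | ⟨hb, he⟩
  · exact h₂₃
  · exact ⟨hb.trans h₂₃.1, he.trans h₂₃.2⟩

theorem SegLT.not_segSub_or_segSub {Δ₁ Δ₂ : Seg} (h : SegLT Δ₁ Δ₂) :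
    ¬ (SegSub Δ₁ Δ₂ ∨ SegSub Δ₂ Δ₁) := by
  rintro (h₁₂ | h₂₁)
  · exact h.1.not_ge h₁₂.1
  · exact h.2.not_ge h₂₁.2

theorem SegSub.refl (Δ : Seg) : SegSub Δ Δ := ⟨le_rfl, le_rfl⟩

theorem SegSub.trans {Δ₁ Δ₂ Δ₃ : Seg} (h₁₂ : SegSub Δ₁ Δ₂) (h₂₃ : SegSub Δ₂ Δ₃) :
    SegSub Δ₁ Δ₃ :=
  ⟨h₂₃.1.trans h₁₂.1, h₁₂.2.trans h₂₃.2⟩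

instance : IsTrans Seg SegSub := ⟨fun _ _ _ => SegSub.trans⟩

theorem segSub_or_segSub_of_isChain {l : List Seg} (hl : l.IsChain SegSub) {Δ₁ Δ₂ : Seg}
    (h₁ : Δ₁ ∈ l) (h₂ : Δ₂ ∈ l) : SegSub Δ₁ Δ₂ ∨ SegSub Δ₂ Δ₁ := by
  have : Std.Symm fun Δ₁ Δ₂ : Seg => SegSub Δ₁ Δ₂ ∨ SegSub Δ₂ Δ₁ := ⟨fun _ _ => Or.symm⟩
  have hpw : l.Pairwise fun Δ₁ Δ₂ => SegSub Δ₁ Δ₂ ∨ SegSub Δ₂ Δ₁ :=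
    (List.isChain_iff_pairwise.mp hl).imp Or.inl
  exact hpw.forall_of_forall (fun Δ (_ : Δ ∈ l) => Or.inl (SegSub.refl Δ)) h₁ h₂

theorem Multiset.mem_or_not_of_mem_sub_filter_sub {α : Type*} [DecidableEq α] {p : α → Prop}
    [DecidablePred p] {m s : Multiset α} {x : α} (hx : x ∈ m - (m - s).filter p) :
    x ∈ s ∨ ¬ p x := by
  refine or_iff_not_imp_left.mpr fun hxs hpx => ?_
  have hs : count x s = 0 := count_eq_zero.mpr hxs
  have hcount := count_pos.mpr hx
  rw [count_sub, count_filter_of_pos hpx, count_sub, hs] at hcount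
  omega

open scoped Classical in
theorem chain_splitting_general (m : Multiset Seg)
    (l : List Seg) (hchain : l.Chain' SegSub)
    (m₁ m₂ : Multiset Seg)
    (hm₁ : m₁ = (m - ↑l).filter (fun Δ => ∃ i ∈ l, SegLE i Δ))
    (hm₂ : m₂ = (m - ↑l).filter (fun Δ => ¬ ∃ i ∈ l, SegLE i Δ)) :
    ∀ Δ ∈ m - m₂, ∀ Δ' ∈ m - m₁, ¬ SegPrec Δ Δ' := by
  subst hm₁ hm₂
  intro Δ hΔ Δ' hΔ' hprec
  obtain ⟨i, hi, hiΔ⟩ : ∃ i ∈ l, SegLE i Δ := by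
    rcases Multiset.mem_or_not_of_mem_sub_filter_sub hΔ with hΔl | hΔS
    · exact ⟨Δ, hΔl, Or.inl rfl⟩
    · exact not_not.mp hΔS
  have hiΔ' : SegLT i Δ' := hiΔ.trans_segLT hprec.segLT
  rcases Multiset.mem_or_not_of_mem_sub_filter_sub hΔ' with hΔ'l | hΔ'S
  · exact hiΔ'.not_segSub_or_segSub (segSub_or_segSub_of_isChain hchain hi (Multiset.mem_coe.mp hΔ'l))
  · exact hΔ'S ⟨i, hi, Or.inr hiΔ'⟩

open scoped Classical in
/-- splitting off a maximal nested chain from a multisegment.  If `l` is a maximal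
nested chain in `𝔪` (of length `ω(𝔪)`), `S` is the set of segments `⪯'`-above some member of the
chain, `𝔪₁` (resp. `𝔪₂`) is the part of `𝔪 − l` inside (resp. outside) `S`, then no segment of
the support of `𝔪 − 𝔪₂` precedes a segment of the support of `𝔪 − 𝔪₁`. -/
theorem chain_splitting (m : Multiset Seg) (k : ℕ) (hk : width m = k)
    (l : List Seg) (hchain : l.Chain' SegSub) (hlen : l.length = k)
    (hle : (↑l : Multiset Seg) ≤ m)
    (m₁ m₂ : Multiset Seg)
    (hm₁ : m₁ = (m - ↑l).filter (fun Δ => ∃ i ∈ l, SegLE i Δ))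
    (hm₂ : m₂ = (m - ↑l).filter (fun Δ => ¬ ∃ i ∈ l, SegLE i Δ)) :
    ∀ Δ ∈ m - m₂, ∀ Δ' ∈ m - m₁, ¬ SegPrec Δ Δ' :=
  chain_splitting_general m l hchain m₁ m₂ hm₁ hm₂
end

section
/- Let a < b and a − 1 ≤ c ≤ b be integers, and consider covering the multiset of points {a,…,b} + {a,…,c} (the point a through c counted twice, c+1 through b counted once) by the supports of two multisets of pairwise disjoint segments 𝔪₁, 𝔪₂ (each consisting of pairwise unlinked, hence disjoint and non-adjacent, segments). If c < b, then the pair {𝔪₁, 𝔪₂} must have the form { Σ_{i=0}^{t} [a_{2i}, a_{2i+1} − 1], [a,c] + Σ_{i=1}^{s} [a_{2i−1}, a_{2i} − 1] } for some integers a = a₀ and c + 1 < a₁ < a₂ < ⋯ < a_l = b + 1, with either l = 2t + 1 = 2s + 1 or l = 2s = 2t + 2. -/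
/-- the support of a segment: the multiset of integer points it covers -/
noncomputable def segSupp (Δ : Seg) : Multiset ℤ := (Finset.Icc (segB Δ) (segE Δ)).val

/-- the support of a multisegment, with multiplicity -/
noncomputable def msSupp (m : Multiset Seg) : Multiset ℤ := (m.map segSupp).sum

/-!
Read the cover from the right. The segment `[d, b]` through `b` lies in one of the two
multisegments, say `𝔪₁`, and separation keeps the rest of `𝔪₁` away from `d - 1`. If `d ≤ c + 1`
and `d > a`, the point `d - 1` would have to be covered twice, so `d = a` and the pair is
`{[a, b]}, {[a, c]}`. Otherwise `d - 1 > c` is covered once, by `𝔪₂`, and the remaining segments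
cover `[a, d - 1] + [a, c]` in the same way with the roles of `𝔪₁` and `𝔪₂` exchanged; unwinding
this recursion deals the blocks alternately to the two sides.
-/

open Multiset

def Separated (Δ Δ' : Seg) : Prop := segE Δ + 1 < segB Δ' ∨ segE Δ' + 1 < segB Δ

instance : Std.Symm Separated := ⟨fun _ _ h => h.symm⟩

lemma Separated.ne {Δ Δ' : Seg} (h : Separated Δ Δ') : Δ ≠ Δ' := by
  rintro rfl
  have := Δ.2
  unfold Separated segB segE at h
  omega

section Separated

variable {m : Multiset Seg} {Δ Δ' : Seg}

lemma nodup_of_pairwise_separated (hm : m.Pairwise Separated) : m.Nodup := by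
  obtain ⟨l, rfl, hl⟩ := hm
  exact coe_nodup.2 (hl.imp Separated.ne)

lemma pairwise_separated_erase (hm : m.Pairwise Separated) : (m.erase Δ).Pairwise Separated := by
  refine Nodup.pairwise (fun _ h₁ _ h₂ hne => ?_) ((nodup_of_pairwise_separated hm).erase Δ)
  exact hm.forall (mem_of_mem_erase h₁) (mem_of_mem_erase h₂) hne

lemma separated_of_mem_erase (hm : m.Pairwise Separated) (hΔ : Δ ∈ m) (hΔ' : Δ' ∈ m.erase Δ) :
    Separated Δ Δ' :=
  hm.forall hΔ (mem_of_mem_erase hΔ')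
    ((nodup_of_pairwise_separated hm).mem_erase_iff.1 hΔ').1.symm

end Separated

noncomputable def cover (m : Multiset Seg) (x : ℤ) : ℕ := (msSupp m).count x

lemma count_Icc_val (p q x : ℤ) :
    (Finset.Icc p q).val.count x = if p ≤ x ∧ x ≤ q then 1 else 0 := by
  simp only [count_eq_of_nodup (Finset.nodup _), Finset.mem_val, Finset.mem_Icc]

section Cover

variable {m : Multiset Seg} {Δ : Seg} {x : ℤ}

lemma cover_zero (x : ℤ) : cover 0 x = 0 := by
  simp [cover, msSupp]

lemma cover_cons (Δ : Seg) (m : Multiset Seg) (x : ℤ) :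
    cover (Δ ::ₘ m) x = (if segB Δ ≤ x ∧ x ≤ segE Δ then 1 else 0) + cover m x := by
  simp only [cover, msSupp, map_cons, sum_cons, count_add, segSupp, count_Icc_val]

lemma cover_eq_of_mem (hΔ : Δ ∈ m) (x : ℤ) :
    cover m x = (if segB Δ ≤ x ∧ x ≤ segE Δ then 1 else 0) + cover (m.erase Δ) x := by
  rw [← cover_cons, cons_erase hΔ]

lemma one_le_cover (hΔ : Δ ∈ m) (hx : segB Δ ≤ x ∧ x ≤ segE Δ) : 1 ≤ cover m x := by
  rw [cover_eq_of_mem hΔ, if_pos hx]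
  omega

lemma exists_mem_of_cover_pos (h : 0 < cover m x) : ∃ Δ ∈ m, segB Δ ≤ x ∧ x ≤ segE Δ := by
  induction m using Multiset.induction_on with
  | empty => simp [cover_zero] at h
  | cons Δ m ih =>
    rw [cover_cons] at h
    by_cases hx : segB Δ ≤ x ∧ x ≤ segE Δ
    · exact ⟨Δ, mem_cons_self Δ m, hx⟩
    · rw [if_neg hx, zero_add] at h
      obtain ⟨Δ', hΔ', hx'⟩ := ih h
      exact ⟨Δ', mem_cons_of_mem hΔ', hx'⟩

lemma cover_eq_zero (h : ∀ Δ ∈ m, ¬(segB Δ ≤ x ∧ x ≤ segE Δ)) : cover m x = 0 := by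
  by_contra hx
  obtain ⟨Δ, hΔ, hxΔ⟩ := exists_mem_of_cover_pos (Nat.pos_of_ne_zero hx)
  exact h Δ hΔ hxΔ

lemma eq_zero_of_cover_eq_zero (h : ∀ x, cover m x = 0) : m = 0 := by
  refine eq_zero_of_forall_notMem fun Δ hΔ => ?_
  have := one_le_cover (x := segB Δ) hΔ ⟨le_rfl, Δ.2⟩
  have := h (segB Δ)
  omega

lemma bounds_of_cover {p q : ℤ} (h : ∀ x, 0 < cover m x → p ≤ x ∧ x ≤ q) (hΔ : Δ ∈ m) :
    p ≤ segB Δ ∧ segE Δ ≤ q :=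
  ⟨(h _ (one_le_cover hΔ ⟨le_rfl, Δ.2⟩)).1, (h _ (one_le_cover hΔ ⟨Δ.2, le_rfl⟩)).2⟩

lemma cover_le_one (hm : m.Pairwise Separated) (x : ℤ) : cover m x ≤ 1 := by
  by_cases hx : cover m x = 0
  · omega
  obtain ⟨Δ, hΔ, hxΔ⟩ := exists_mem_of_cover_pos (Nat.pos_of_ne_zero hx)
  have hrest : cover (m.erase Δ) x = 0 := cover_eq_zero fun Δ' hΔ' hxΔ' => by
    have := separated_of_mem_erase hm hΔ hΔ'
    unfold Separated at this
    omega
  rw [cover_eq_of_mem hΔ, if_pos hxΔ, hrest]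

lemma map_val_eq_of_cover (hm : m.Pairwise Separated) {p q : ℤ}
    (h : ∀ x, cover m x = if p ≤ x ∧ x ≤ q then 1 else 0) :
    m.map Subtype.val = if p ≤ q then {(p, q)} else 0 := by
  have hbounds : ∀ Δ ∈ m, p ≤ segB Δ ∧ segE Δ ≤ q :=
    fun Δ => bounds_of_cover fun x hx => by rw [h] at hx; split_ifs at hx with hpx <;> omega
  split_ifs with hpq
  swap
  · rw [eq_zero_of_cover_eq_zero (m := m) fun x => by rw [h, if_neg (by omega)], Multiset.map_zero]
  obtain ⟨Δ, hΔ, hpΔ⟩ := exists_mem_of_cover_pos (x := p) (by rw [h, if_pos ⟨le_rfl, hpq⟩]; omega)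
  have hΔp : segB Δ = p := le_antisymm hpΔ.1 (hbounds Δ hΔ).1
  have hΔq : segE Δ = q := by
    by_contra hne
    have hcov : 0 < cover m (segE Δ + 1) := by
      rw [h, if_pos ⟨by have := Δ.2; omega, by have := (hbounds Δ hΔ).2; omega⟩]
      omega
    obtain ⟨Δ', hΔ', hxΔ'⟩ := exists_mem_of_cover_pos hcov
    have hsep := hm.forall hΔ hΔ' (by rintro rfl; omega)
    have := (hbounds Δ' hΔ').1
    unfold Separated at hsep
    omega
  have herase : m.erase Δ = 0 := eq_zero_of_cover_eq_zero fun x => by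
    have := h x
    rw [cover_eq_of_mem hΔ, hΔp, hΔq] at this
    split_ifs at this <;> omega
  rw [← cons_erase hΔ, herase, map_cons, Multiset.map_zero]
  exact congrArg ({·}) (Prod.ext hΔp hΔq)

end Cover

/-- The blocks `[A i, A (i + 1) - 1]`, `i < l`, dealt alternately to the two components so that
the last one, `i = l - 1`, lands in the first; `[a, c]` (empty when `c < a`) acts as block `-1`. -/
def blockPair (a c : ℤ) (A : ℕ → ℤ) : ℕ → Multiset (ℤ × ℤ) × Multiset (ℤ × ℤ)
  | 0 => (if a ≤ c then {(a, c)} else 0, 0)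
  | n + 1 => ((A n, A (n + 1) - 1) ::ₘ (blockPair a c A n).2, (blockPair a c A n).1)

section BlockPair

variable (a c : ℤ) (A : ℕ → ℤ)

lemma blockPair_congr {B : ℕ → ℤ} {l : ℕ} (h : ∀ i ≤ l, A i = B i) :
    blockPair a c A l = blockPair a c B l := by
  induction l with
  | zero => rfl
  | succ n ih =>
    rw [blockPair, blockPair, ih fun i hi => h i (by omega), h n (by omega), h (n + 1) le_rfl]

lemma blockPair_update_succ (l : ℕ) (v : ℤ) :
    blockPair a c (Function.update A (l + 1) v) (l + 1) =
      ((A l, v - 1) ::ₘ (blockPair a c A l).2, (blockPair a c A l).1) := by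
  rw [blockPair, blockPair_congr a c _ (B := A) fun i hi => Function.update_of_ne (by omega) _ _,
    Function.update_self, Function.update_of_ne (by omega)]

lemma blockPair_add_two (n : ℕ) :
    blockPair a c A (n + 2) =
      ((A (n + 1), A (n + 2) - 1) ::ₘ (blockPair a c A n).1,
        (A n, A (n + 1) - 1) ::ₘ (blockPair a c A n).2) :=
  rfl

lemma blockPair_odd (t : ℕ) :
    blockPair a c A (2 * t + 1) =
      ((range (t + 1)).map (fun i => (A (2 * i), A (2 * i + 1) - 1)),
        (if a ≤ c then {(a, c)} else 0) +
          (range t).map (fun i => (A (2 * i + 1), A (2 * i + 2) - 1))) := by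
  induction t with
  | zero => simp [blockPair]
  | succ t ih =>
    rw [show 2 * (t + 1) + 1 = 2 * t + 1 + 2 by ring, blockPair_add_two, ih]
    simp only [range_succ, map_cons, add_cons]
    ring_nf

lemma blockPair_even (t : ℕ) :
    blockPair a c A (2 * t + 2) =
      ((if a ≤ c then {(a, c)} else 0) +
          (range (t + 1)).map (fun i => (A (2 * i + 1), A (2 * i + 2) - 1)),
        (range (t + 1)).map (fun i => (A (2 * i), A (2 * i + 1) - 1))) := by
  rw [blockPair, blockPair_odd]
  simp only [range_succ, map_cons, add_cons]

lemma blockPair_eq_or_swap_eq {l : ℕ} (hl : 1 ≤ l) :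
    ∃ s t : ℕ, ((l = 2 * t + 1 ∧ l = 2 * s + 1) ∨ (l = 2 * s ∧ l = 2 * t + 2)) ∧
      (let P := ((range (t + 1)).map (fun i => (A (2 * i), A (2 * i + 1) - 1)),
          (if a ≤ c then {(a, c)} else 0) +
            (range s).map (fun i => (A (2 * i + 1), A (2 * i + 2) - 1)));
        blockPair a c A l = P ∨ (blockPair a c A l).swap = P) := by
  obtain ⟨k, rfl | rfl⟩ := Nat.even_or_odd' l
  · obtain ⟨t, rfl⟩ : ∃ t, k = t + 1 := ⟨k - 1, by omega⟩
    refine ⟨t + 1, t, Or.inr ⟨by ring, by ring⟩, Or.inr ?_⟩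
    rw [show 2 * (t + 1) = 2 * t + 2 by ring, blockPair_even]
    rfl
  · exact ⟨k, k, Or.inl ⟨rfl, rfl⟩, Or.inl (blockPair_odd a c A k)⟩

end BlockPair

theorem exists_blockPair_of_cover_pos {a b c : ℤ} {m₁ m₂ : Multiset Seg}
    (hc : a - 1 ≤ c) (hcb : c < b)
    (hm₁ : m₁.Pairwise Separated) (hm₂ : m₂.Pairwise Separated)
    (hcover : ∀ x, cover m₁ x + cover m₂ x =
      (if a ≤ x ∧ x ≤ b then 1 else 0) + (if a ≤ x ∧ x ≤ c then 1 else 0))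
    (hb : 0 < cover m₁ b) :
    ∃ (l : ℕ) (A : ℕ → ℤ), 1 ≤ l ∧ A 0 = a ∧ A l = b + 1 ∧ c + 1 < A 1 ∧
      (∀ i, 1 ≤ i → i < l → A i < A (i + 1)) ∧
      (m₁.map Subtype.val, m₂.map Subtype.val) = blockPair a c A l := by
  obtain ⟨Δ, hΔ, hbΔ⟩ := exists_mem_of_cover_pos hb
  have hbounds : ∀ Δ' ∈ m₁, a ≤ segB Δ' ∧ segE Δ' ≤ b := fun Δ' =>
    bounds_of_cover fun x hx => by have := hcover x; split_ifs at this <;> omega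
  have hΔa := (hbounds Δ hΔ).1
  have hval : Δ.val = (segB Δ, b) := Prod.ext rfl (le_antisymm (hbounds Δ hΔ).2 hbΔ.2)
  have hrest : ∀ x, segB Δ - 1 ≤ x → cover (m₁.erase Δ) x = 0 := fun x hx =>
    cover_eq_zero fun Δ' hΔ' hxΔ' => by
      have hsep := separated_of_mem_erase hm₁ hΔ hΔ'
      have := (hbounds Δ' (mem_of_mem_erase hΔ')).2
      unfold Separated at hsep
      omega
  have hres : ∀ x, cover m₂ x + cover (m₁.erase Δ) x =
      (if a ≤ x ∧ x ≤ segB Δ - 1 then 1 else 0) + (if a ≤ x ∧ x ≤ c then 1 else 0) := fun x => by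
    have := hcover x
    rw [cover_eq_of_mem hΔ] at this
    split_ifs at this ⊢ <;> omega
  by_cases hd : segB Δ ≤ c + 1
  · -- `segB Δ - 1` would be covered twice, but only `m₂` can cover it.
    have hΔa' : segB Δ = a := by
      by_contra hne
      have := hres (segB Δ - 1)
      have := hrest (segB Δ - 1) le_rfl
      have := cover_le_one hm₂ (segB Δ - 1)
      split_ifs at * <;> omega
    have herase : m₁.erase Δ = 0 := eq_zero_of_cover_eq_zero fun x => by
      by_cases hx : segB Δ - 1 ≤ x
      · exact hrest x hx
      · have := hres x
        split_ifs at this <;> omega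
    have hm₂val : m₂.map Subtype.val = if a ≤ c then {(a, c)} else 0 :=
      map_val_eq_of_cover hm₂ fun x => by
        have := hres x
        rw [herase, cover_zero] at this
        split_ifs at this ⊢ <;> omega
    refine ⟨1, fun i => if i = 0 then a else b + 1, le_rfl, rfl, rfl, by simp; omega,
      by omega, ?_⟩
    rw [← cons_erase hΔ, herase, hm₂val, map_cons, Multiset.map_zero, hval, hΔa']
    simp [blockPair]
  · have hcov : 0 < cover m₂ (segB Δ - 1) := by
      have := hres (segB Δ - 1)
      rw [hrest _ le_rfl] at this
      split_ifs at this <;> omega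
    obtain ⟨l, A, hl, hA0, hAl, hA1, hmono, hpair⟩ :=
      exists_blockPair_of_cover_pos hc (by omega) hm₂ (pairwise_separated_erase hm₁) hres hcov
    refine ⟨l + 1, Function.update A (l + 1) (b + 1), by omega,
      by rw [Function.update_of_ne (by omega), hA0], Function.update_self ..,
      by rw [Function.update_of_ne (by omega)]; exact hA1, fun i hi hil => ?_, ?_⟩
    · rw [Function.update_of_ne (by omega)]
      rcases Nat.lt_succ_iff_lt_or_eq.1 hil with hil | rfl
      · rw [Function.update_of_ne (by omega)]
        exact hmono i hi hil
      · rw [Function.update_self, hAl]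
        omega
    · rw [blockPair_update_succ, ← hpair, hAl, sub_add_cancel, add_sub_cancel_right, ← hval,
        ← map_cons, cons_erase hΔ]
termination_by (b - a).toNat
decreasing_by omega

lemma Prod.eq_or_swap_eq_trans {α : Type*} {p q r : α × α} (hpq : p = q ∨ p.swap = q)
    (hqr : q = r ∨ q.swap = r) : p = r ∨ p.swap = r := by
  rcases hpq with rfl | rfl <;> rcases hqr with rfl | rfl <;> simp

theorem exists_blockPair_or_swap {a b c : ℤ} {m₁ m₂ : Multiset Seg} (hc : a - 1 ≤ c) (hcb : c < b)
    (hm₁ : m₁.Pairwise Separated) (hm₂ : m₂.Pairwise Separated)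
    (hcover : ∀ x, cover m₁ x + cover m₂ x =
      (if a ≤ x ∧ x ≤ b then 1 else 0) + (if a ≤ x ∧ x ≤ c then 1 else 0)) :
    ∃ (l : ℕ) (A : ℕ → ℤ), 1 ≤ l ∧ A 0 = a ∧ A l = b + 1 ∧ c + 1 < A 1 ∧
      (∀ i, 1 ≤ i → i < l → A i < A (i + 1)) ∧
      ((m₁.map Subtype.val, m₂.map Subtype.val) = blockPair a c A l ∨
        (m₁.map Subtype.val, m₂.map Subtype.val).swap = blockPair a c A l) := by
  have hb := hcover b
  rw [if_pos ⟨by omega, le_rfl⟩, if_neg (by omega)] at hb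
  by_cases hb₁ : 0 < cover m₁ b
  · obtain ⟨l, A, h⟩ := exists_blockPair_of_cover_pos hc hcb hm₁ hm₂ hcover hb₁
    exact ⟨l, A, by tauto⟩
  · obtain ⟨l, A, h⟩ := exists_blockPair_of_cover_pos hc hcb hm₂ hm₁
      (fun x => by rw [add_comm]; exact hcover x) (by omega)
    exact ⟨l, A, by tauto⟩

theorem two_separated_covers_alternate_general (a b c : ℤ)
    (hc : a - 1 ≤ c) (hcb : c < b)
    (m₁ m₂ : Multiset Seg)
    (hsep₁ : m₁.Pairwise (fun Δ Δ' => segE Δ + 1 < segB Δ' ∨ segE Δ' + 1 < segB Δ))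
    (hsep₂ : m₂.Pairwise (fun Δ Δ' => segE Δ + 1 < segB Δ' ∨ segE Δ' + 1 < segB Δ))
    (hsupp : msSupp m₁ + msSupp m₂ = (Finset.Icc a b).val + (Finset.Icc a c).val) :
    ∃ (l s t : ℕ) (A : ℕ → ℤ),
      A 0 = a ∧ A l = b + 1 ∧ c + 1 < A 1 ∧
      (∀ i, 1 ≤ i → i < l → A i < A (i + 1)) ∧
      ((l = 2 * t + 1 ∧ l = 2 * s + 1) ∨ (l = 2 * s ∧ l = 2 * t + 2)) ∧
      (let N₁ : Multiset (ℤ × ℤ) :=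
          (Multiset.range (t + 1)).map (fun i => (A (2 * i), A (2 * i + 1) - 1));
       let N₂ : Multiset (ℤ × ℤ) :=
          (if a ≤ c then {((a : ℤ), c)} else 0) +
            (Multiset.range s).map (fun i => (A (2 * i + 1), A (2 * i + 2) - 1));
       (m₁.map Subtype.val = N₁ ∧ m₂.map Subtype.val = N₂) ∨
         (m₂.map Subtype.val = N₁ ∧ m₁.map Subtype.val = N₂)) := by
  have hcover : ∀ x, cover m₁ x + cover m₂ x =
      (if a ≤ x ∧ x ≤ b then 1 else 0) + (if a ≤ x ∧ x ≤ c then 1 else 0) := fun x => by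
    simpa only [cover, count_add, count_Icc_val] using congrArg (count x) hsupp
  obtain ⟨l, A, hl, hA0, hAl, hA1, hmono, hpair⟩ :=
    exists_blockPair_or_swap hc hcb hsep₁ hsep₂ hcover
  obtain ⟨s, t, hlst, hblocks⟩ := blockPair_eq_or_swap_eq a c A hl
  refine ⟨l, s, t, A, hA0, hAl, hA1, hmono, hlst, ?_⟩
  simpa only [Prod.swap_prod_mk, Prod.mk.injEq] using Prod.eq_or_swap_eq_trans hpair hblocks

/-- if the supports of two multisegments, each made of pairwise separated
(disjoint and non-adjacent, i.e. pairwise unlinked) segments, together cover `[a,c]` twice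
and `(c,b]` once, with `c < b`, then the pair `{𝔪₁, 𝔪₂}` has the alternating-blocks form
`{ Σ_{i=0}^t [a_{2i}, a_{2i+1}−1] , [a,c] + Σ_{i=1}^s [a_{2i−1}, a_{2i}−1] }` for some
`a = a₀`, `c+1 < a₁ < ⋯ < a_l = b+1` with `l = 2t+1 = 2s+1` or `l = 2s = 2t+2`. -/
theorem two_separated_covers_alternate (a b c : ℤ)
    (hab : a < b) (hc : a - 1 ≤ c) (hcb : c < b)
    (m₁ m₂ : Multiset Seg)
    (hsep₁ : m₁.Pairwise (fun Δ Δ' => segE Δ + 1 < segB Δ' ∨ segE Δ' + 1 < segB Δ))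
    (hsep₂ : m₂.Pairwise (fun Δ Δ' => segE Δ + 1 < segB Δ' ∨ segE Δ' + 1 < segB Δ))
    (hsupp : msSupp m₁ + msSupp m₂ = (Finset.Icc a b).val + (Finset.Icc a c).val) :
    ∃ (l s t : ℕ) (A : ℕ → ℤ),
      A 0 = a ∧ A l = b + 1 ∧ c + 1 < A 1 ∧
      (∀ i, 1 ≤ i → i < l → A i < A (i + 1)) ∧
      ((l = 2 * t + 1 ∧ l = 2 * s + 1) ∨ (l = 2 * s ∧ l = 2 * t + 2)) ∧
      (let N₁ : Multiset (ℤ × ℤ) :=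
          (Multiset.range (t + 1)).map (fun i => (A (2 * i), A (2 * i + 1) - 1));
       let N₂ : Multiset (ℤ × ℤ) :=
          (if a ≤ c then {((a : ℤ), c)} else 0) +
            (Multiset.range s).map (fun i => (A (2 * i + 1), A (2 * i + 2) - 1));
       (m₁.map Subtype.val = N₁ ∧ m₂.map Subtype.val = N₂) ∨
         (m₂.map Subtype.val = N₁ ∧ m₁.map Subtype.val = N₂)) :=
  two_separated_covers_alternate_general a b c hc hcb m₁ m₂ hsep₁ hsep₂ hsupp
end

section
/- With notation as follows: suppose a = a₀, e < a₁ < ⋯ < a_l = b+1 and a = a'₀, e < a'₁ < ⋯ < a'_{l'} = b+1 are two strictly increasing integer sequences with the same first and last terms, and suppose each odd-indexed interval [a_{2i−1}, a_{2i} − 1] (respectively [a'_{2i−1}, a'_{2i} − 1]) arises as a 'truncation' [cⱼ, eⱼ] of a fixed ladder's segments [dⱼ, eⱼ] (meaning the right endpoints eⱼ come from a fixed strictly decreasing sequence and dⱼ ≤ cⱼ ≤ eⱼ + 1 with cⱼ strictly decreasing in j), and similarly each even-indexed interval arises from a second fixed ladder. Then the two sequences coincide: l = l' and aᵢ = a'ᵢ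 for all i. -/
open Set

lemma strictAntiOn_Icc_one_of_succ_lt {β : Type*} [Preorder β] {f : ℕ → β} {k : ℕ}
    (h : ∀ j, 1 ≤ j → j < k → f (j + 1) < f j) : StrictAntiOn f (Icc 1 k) :=
  strictAntiOn_of_succ_lt ordConnected_Icc fun j _ hj _ => by
    rw [Order.succ_eq_add_one, mem_Icc] at *
    exact h j hj.1 (by omega)

/-- The blocks `[A p, A (p + 1) - 1]` at the positions `p` satisfying `P` are exactly the nonempty
truncations `[c j, e j]` of a ladder with right endpoints `e`. -/
def TruncationBlocks (P : ℕ → Prop) (l : ℕ) (A : ℕ → ℤ) (k : ℕ) (c e : ℕ → ℤ) : Prop :=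
  (∀ p, P p → p + 1 ≤ l → ∃ j ∈ Icc 1 k, A p = c j ∧ A (p + 1) - 1 = e j) ∧
    ∀ j ∈ Icc 1 k, c j ≤ e j → ∃ p, P p ∧ p + 1 ≤ l ∧ A p = c j ∧ A (p + 1) - 1 = e j

namespace TruncationBlocks

variable {P : ℕ → Prop} {l l' k p : ℕ} {A A' c c' e : ℕ → ℤ}

lemma index_le (he : InjOn e (Icc 1 k)) (hc : StrictAntiOn c (Icc 1 k))
    (hA : StrictMonoOn A (Iic l)) (hA' : StrictMonoOn A' (Iic l'))
    (hB : TruncationBlocks P l A k c e) (hB' : TruncationBlocks P l' A' k c' e)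
    (hagree : ∀ q ≤ p, A q = A' q) (hpl : p ≤ l) (hpl' : p + 1 ≤ l')
    {j j' : ℕ} (hj : j ∈ Icc 1 k) (hj' : j' ∈ Icc 1 k)
    (hAp : A p = c j) (hA'p : A' p = c' j') (hA'e : A' (p + 1) - 1 = e j') : j' ≤ j := by
  by_contra! hlt
  have hcj : c j' < c j := hc hj hj' hlt
  have hA'p_lt : A' p < A' (p + 1) := hA' (mem_Iic.2 (by omega)) (mem_Iic.2 hpl') (by omega)
  have hAA'p := hagree p le_rfl
  obtain ⟨q, hPq, hql, hAq, hAqe⟩ := hB.2 j' hj' (by omega)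
  have hqp : q < p := (hA.lt_iff_lt (mem_Iic.2 (by omega)) (mem_Iic.2 hpl)).1 (by omega)
  obtain ⟨j'', hj'', hA'q, hA'qe⟩ := hB'.1 q hPq (by omega)
  have hj''j' : j'' = j' := he hj'' hj' (by rw [← hA'qe, ← hAqe, hagree (q + 1) hqp])
  subst hj''j'
  have hA'qp : A' q < A' p := hA' (mem_Iic.2 (by omega)) (mem_Iic.2 (by omega)) hqp
  omega

lemma eq_succ (he : InjOn e (Icc 1 k)) (hc : StrictAntiOn c (Icc 1 k))
    (hc' : StrictAntiOn c' (Icc 1 k))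
    (hA : StrictMonoOn A (Iic l)) (hA' : StrictMonoOn A' (Iic l'))
    (hB : TruncationBlocks P l A k c e) (hB' : TruncationBlocks P l' A' k c' e)
    (hagree : ∀ q ≤ p, A q = A' q) (hP : P p) (hpl : p + 1 ≤ l) (hpl' : p + 1 ≤ l') :
    A (p + 1) = A' (p + 1) := by
  obtain ⟨j, hj, hAp, hAe⟩ := hB.1 p hP hpl
  obtain ⟨j', hj', hA'p, hA'e⟩ := hB'.1 p hP hpl'
  have hjj' : j = j' :=
    le_antisymm (hB'.index_le he hc' hA' hA hB (fun q hq => (hagree q hq).symm) (by omega) hpl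
      hj' hj hA'p hAp hAe)
      (hB.index_le he hc hA hA' hB' hagree (by omega) hpl' hj hj' hAp hA'p hA'e)
  subst hjj'
  omega

end TruncationBlocks

lemma truncationBlocks_even {l k : ℕ} {A c e : ℕ → ℤ}
    (hfwd : ∀ i, 2 * i + 1 ≤ l → ∃ j, 1 ≤ j ∧ j ≤ k ∧ A (2 * i) = c j ∧ A (2 * i + 1) - 1 = e j)
    (hrev : ∀ j, 1 ≤ j → j ≤ k → c j ≤ e j →
      ∃ i, 2 * i + 1 ≤ l ∧ A (2 * i) = c j ∧ A (2 * i + 1) - 1 = e j) :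
    TruncationBlocks Even l A k c e := by
  refine ⟨?_, fun j hj hce => ?_⟩
  · rintro p ⟨i, rfl⟩ hp
    obtain ⟨j, hj1, hjk, hc, he⟩ := hfwd i (by omega)
    exact ⟨j, ⟨hj1, hjk⟩, by rwa [← two_mul], by rwa [← two_mul]⟩
  · obtain ⟨i, hil, hc, he⟩ := hrev j hj.1 hj.2 hce
    exact ⟨2 * i, even_two_mul i, hil, hc, he⟩

lemma truncationBlocks_odd {l k : ℕ} {A c e : ℕ → ℤ}
    (hfwd : ∀ i, 1 ≤ i → 2 * i ≤ l →
      ∃ j, 1 ≤ j ∧ j ≤ k ∧ A (2 * i - 1) = c j ∧ A (2 * i) - 1 = e j)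
    (hrev : ∀ j, 1 ≤ j → j ≤ k → c j ≤ e j →
      ∃ i, 1 ≤ i ∧ 2 * i ≤ l ∧ A (2 * i - 1) = c j ∧ A (2 * i) - 1 = e j) :
    TruncationBlocks Odd l A k c e := by
  refine ⟨?_, fun j hj hce => ?_⟩
  · rintro p ⟨i, rfl⟩ hp
    obtain ⟨j, hj1, hjk, hc, he⟩ := hfwd (i + 1) (by omega) (by omega)
    rw [show 2 * (i + 1) - 1 = 2 * i + 1 by omega] at hc
    exact ⟨j, ⟨hj1, hjk⟩, hc, he⟩
  · obtain ⟨i, hi, hil, hc, he⟩ := hrev j hj.1 hj.2 hce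
    refine ⟨2 * i - 1, ⟨i - 1, by omega⟩, by omega, hc, ?_⟩
    rwa [show 2 * i - 1 + 1 = 2 * i by omega]

theorem eq_of_truncationBlocks_even_odd {l l' k₁ k₂ : ℕ} {A A' c₁ c₁' e₁ c₂ c₂' e₂ : ℕ → ℤ}
    (he₁ : InjOn e₁ (Icc 1 k₁)) (hc₁ : StrictAntiOn c₁ (Icc 1 k₁))
    (hc₁' : StrictAntiOn c₁' (Icc 1 k₁))
    (he₂ : InjOn e₂ (Icc 1 k₂)) (hc₂ : StrictAntiOn c₂ (Icc 1 k₂))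
    (hc₂' : StrictAntiOn c₂' (Icc 1 k₂))
    (hA : StrictMonoOn A (Iic l)) (hA' : StrictMonoOn A' (Iic l'))
    (hB₁ : TruncationBlocks Even l A k₁ c₁ e₁) (hB₁' : TruncationBlocks Even l' A' k₁ c₁' e₁)
    (hB₂ : TruncationBlocks Odd l A k₂ c₂ e₂) (hB₂' : TruncationBlocks Odd l' A' k₂ c₂' e₂)
    (h0 : A 0 = A' 0) : ∀ i ≤ l, i ≤ l' → A i = A' i := by
  suffices ∀ n, ∀ i ≤ n, i ≤ l → i ≤ l' → A i = A' i from fun i hi hi' => this i i le_rfl hi hi'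
  intro n
  induction n with
  | zero => intro i hi _ _; rwa [Nat.le_zero.1 hi]
  | succ n ih =>
    intro i hi hil hil'
    rcases Nat.lt_or_eq_of_le hi with hi | rfl
    · exact ih i (by omega) hil hil'
    have hagree : ∀ q ≤ n, A q = A' q := fun q hq => ih q hq (by omega) (by omega)
    rcases Nat.even_or_odd n with hn | hn
    · exact hB₁.eq_succ he₁ hc₁ hc₁' hA hA' hB₁' hagree hn hil hil'
    · exact hB₂.eq_succ he₂ hc₂ hc₂' hA hA' hB₂' hagree hn hil hil'

lemma eq_of_strictMonoOn_Iic_of_agree {β : Type*} [LinearOrder β] {l l' : ℕ} {A A' : ℕ → β}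
    (hA : StrictMonoOn A (Iic l)) (hA' : StrictMonoOn A' (Iic l'))
    (hlast : A l = A' l') (hagree : ∀ i ≤ l, i ≤ l' → A i = A' i) : l = l' := by
  by_contra hne
  rcases lt_or_gt_of_ne hne with h | h
  · have hlt := hA' (mem_Iic.2 h.le) (mem_Iic.2 le_rfl) h
    rw [← hagree l le_rfl h.le, hlast] at hlt
    exact lt_irrefl _ hlt
  · have hlt := hA (mem_Iic.2 h.le) (mem_Iic.2 le_rfl) h
    rw [hagree l' h.le le_rfl, hlast] at hlt
    exact lt_irrefl _ hlt

theorem alternating_decomposition_unique_general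
    (a b : ℤ) (l l' : ℕ) (A A' : ℕ → ℤ)
    (k₁ k₂ : ℕ) (e₁ c₁ c₁' e₂ c₂ c₂' : ℕ → ℤ)
    -- the two ladders
    (he₁ : ∀ j, 1 ≤ j → j < k₁ → e₁ (j + 1) < e₁ j)
    (he₂ : ∀ j, 1 ≤ j → j < k₂ → e₂ (j + 1) < e₂ j)
    -- the truncation data
    (hc₁m : ∀ j, 1 ≤ j → j < k₁ → c₁ (j + 1) < c₁ j)
    (hc₂m : ∀ j, 1 ≤ j → j < k₂ → c₂ (j + 1) < c₂ j)
    (hc₁m' : ∀ j, 1 ≤ j → j < k₁ → c₁' (j + 1) < c₁' j)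
    (hc₂m' : ∀ j, 1 ≤ j → j < k₂ → c₂' (j + 1) < c₂' j)
    -- the two strictly increasing block-boundary sequences, same first and last terms
    (hA0 : A 0 = a) (hA'0 : A' 0 = a) (hAl : A l = b + 1) (hA'l : A' l' = b + 1)
    (hAmono : ∀ i, i < l → A i < A (i + 1))
    (hA'mono : ∀ i, i < l' → A' i < A' (i + 1))
    -- blocks of A are truncated segments of the respective ladders
    (hAodd : ∀ i, 2 * i + 1 ≤ l → ∃ j, 1 ≤ j ∧ j ≤ k₁ ∧
      A (2 * i) = c₁ j ∧ A (2 * i + 1) - 1 = e₁ j)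
    (hAeven : ∀ i, 1 ≤ i → 2 * i ≤ l → ∃ j, 1 ≤ j ∧ j ≤ k₂ ∧
      A (2 * i - 1) = c₂ j ∧ A (2 * i) - 1 = e₂ j)
    (hA'odd : ∀ i, 2 * i + 1 ≤ l' → ∃ j, 1 ≤ j ∧ j ≤ k₁ ∧
      A' (2 * i) = c₁' j ∧ A' (2 * i + 1) - 1 = e₁ j)
    (hA'even : ∀ i, 1 ≤ i → 2 * i ≤ l' → ∃ j, 1 ≤ j ∧ j ≤ k₂ ∧
      A' (2 * i - 1) = c₂' j ∧ A' (2 * i) - 1 = e₂ j)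
    -- conversely, every nontrivial truncated segment is a block
    (hrev₁ : ∀ j, 1 ≤ j → j ≤ k₁ → c₁ j ≤ e₁ j →
      ∃ i, 2 * i + 1 ≤ l ∧ A (2 * i) = c₁ j ∧ A (2 * i + 1) - 1 = e₁ j)
    (hrev₂ : ∀ j, 1 ≤ j → j ≤ k₂ → c₂ j ≤ e₂ j →
      ∃ i, 1 ≤ i ∧ 2 * i ≤ l ∧ A (2 * i - 1) = c₂ j ∧ A (2 * i) - 1 = e₂ j)
    (hrev₁' : ∀ j, 1 ≤ j → j ≤ k₁ → c₁' j ≤ e₁ j →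
      ∃ i, 2 * i + 1 ≤ l' ∧ A' (2 * i) = c₁' j ∧ A' (2 * i + 1) - 1 = e₁ j)
    (hrev₂' : ∀ j, 1 ≤ j → j ≤ k₂ → c₂' j ≤ e₂ j →
      ∃ i, 1 ≤ i ∧ 2 * i ≤ l' ∧ A' (2 * i - 1) = c₂' j ∧ A' (2 * i) - 1 = e₂ j) :
    l = l' ∧ ∀ i, i ≤ l → A i = A' i := by
  have hA : StrictMonoOn A (Iic l) := strictMonoOn_Iic_of_lt_succ (by simpa using hAmono)
  have hA' : StrictMonoOn A' (Iic l') := strictMonoOn_Iic_of_lt_succ (by simpa using hA'mono)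
  have hagree := eq_of_truncationBlocks_even_odd
    (strictAntiOn_Icc_one_of_succ_lt he₁).injOn (strictAntiOn_Icc_one_of_succ_lt hc₁m)
    (strictAntiOn_Icc_one_of_succ_lt hc₁m')
    (strictAntiOn_Icc_one_of_succ_lt he₂).injOn (strictAntiOn_Icc_one_of_succ_lt hc₂m)
    (strictAntiOn_Icc_one_of_succ_lt hc₂m') hA hA'
    (truncationBlocks_even hAodd hrev₁) (truncationBlocks_even hA'odd hrev₁')
    (truncationBlocks_odd hAeven hrev₂) (truncationBlocks_odd hA'even hrev₂')
    (hA0.trans hA'0.symm)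
  have hll' := eq_of_strictMonoOn_Iic_of_agree hA hA' (hAl.trans hA'l.symm) hagree
  exact ⟨hll', fun i hi => hagree i hi (hll' ▸ hi)⟩

/-- uniqueness of the alternating-block decomposition compatible with
left-truncations of two fixed ladders.  The segments of ladder `i` are `[dᵢ j, eᵢ j]`,
`j = 1,…,kᵢ`, enumerated with strictly decreasing right (and left) endpoints; a truncation
datum is a strictly decreasing choice `cᵢ j` with `dᵢ j ≤ cᵢ j ≤ eᵢ j + 1`.  Two alternating
decompositions `A, A'` of `[a,b] ∖ [a,e]` whose even-indexed blocks are nontrivial truncated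
segments of ladder 1, odd-indexed blocks nontrivial truncated segments of ladder 2, and
conversely, must coincide. -/
theorem alternating_decomposition_unique
    (a b eInt : ℤ) (l l' : ℕ) (A A' : ℕ → ℤ)
    (k₁ k₂ : ℕ) (d₁ e₁ c₁ c₁' d₂ e₂ c₂ c₂' : ℕ → ℤ)
    -- the two ladders
    (he₁ : ∀ j, 1 ≤ j → j < k₁ → e₁ (j + 1) < e₁ j)
    (hd₁ : ∀ j, 1 ≤ j → j < k₁ → d₁ (j + 1) < d₁ j)
    (he₂ : ∀ j, 1 ≤ j → j < k₂ → e₂ (j + 1) < e₂ j)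
    (hd₂ : ∀ j, 1 ≤ j → j < k₂ → d₂ (j + 1) < d₂ j)
    (hde₁ : ∀ j, 1 ≤ j → j ≤ k₁ → d₁ j ≤ e₁ j)
    (hde₂ : ∀ j, 1 ≤ j → j ≤ k₂ → d₂ j ≤ e₂ j)
    -- the truncation data
    (hc₁ : ∀ j, 1 ≤ j → j ≤ k₁ → d₁ j ≤ c₁ j ∧ c₁ j ≤ e₁ j + 1)
    (hc₁m : ∀ j, 1 ≤ j → j < k₁ → c₁ (j + 1) < c₁ j)
    (hc₂ : ∀ j, 1 ≤ j → j ≤ k₂ → d₂ j ≤ c₂ j ∧ c₂ j ≤ e₂ j + 1)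
    (hc₂m : ∀ j, 1 ≤ j → j < k₂ → c₂ (j + 1) < c₂ j)
    (hc₁' : ∀ j, 1 ≤ j → j ≤ k₁ → d₁ j ≤ c₁' j ∧ c₁' j ≤ e₁ j + 1)
    (hc₁m' : ∀ j, 1 ≤ j → j < k₁ → c₁' (j + 1) < c₁' j)
    (hc₂' : ∀ j, 1 ≤ j → j ≤ k₂ → d₂ j ≤ c₂' j ∧ c₂' j ≤ e₂ j + 1)
    (hc₂m' : ∀ j, 1 ≤ j → j < k₂ → c₂' (j + 1) < c₂' j)
    -- the two strictly increasing block-boundary sequences, same first and last terms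
    (hA0 : A 0 = a) (hA'0 : A' 0 = a) (hAl : A l = b + 1) (hA'l : A' l' = b + 1)
    (hA1 : eInt < A 1) (hA'1 : eInt < A' 1)
    (hAmono : ∀ i, i < l → A i < A (i + 1))
    (hA'mono : ∀ i, i < l' → A' i < A' (i + 1))
    -- blocks of A are truncated segments of the respective ladders
    (hAodd : ∀ i, 2 * i + 1 ≤ l → ∃ j, 1 ≤ j ∧ j ≤ k₁ ∧
      A (2 * i) = c₁ j ∧ A (2 * i + 1) - 1 = e₁ j)
    (hAeven : ∀ i, 1 ≤ i → 2 * i ≤ l → ∃ j, 1 ≤ j ∧ j ≤ k₂ ∧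
      A (2 * i - 1) = c₂ j ∧ A (2 * i) - 1 = e₂ j)
    (hA'odd : ∀ i, 2 * i + 1 ≤ l' → ∃ j, 1 ≤ j ∧ j ≤ k₁ ∧
      A' (2 * i) = c₁' j ∧ A' (2 * i + 1) - 1 = e₁ j)
    (hA'even : ∀ i, 1 ≤ i → 2 * i ≤ l' → ∃ j, 1 ≤ j ∧ j ≤ k₂ ∧
      A' (2 * i - 1) = c₂' j ∧ A' (2 * i) - 1 = e₂ j)
    -- conversely, every nontrivial truncated segment is a block
    (hrev₁ : ∀ j, 1 ≤ j → j ≤ k₁ → c₁ j ≤ e₁ j →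
      ∃ i, 2 * i + 1 ≤ l ∧ A (2 * i) = c₁ j ∧ A (2 * i + 1) - 1 = e₁ j)
    (hrev₂ : ∀ j, 1 ≤ j → j ≤ k₂ → c₂ j ≤ e₂ j →
      ∃ i, 1 ≤ i ∧ 2 * i ≤ l ∧ A (2 * i - 1) = c₂ j ∧ A (2 * i) - 1 = e₂ j)
    (hrev₁' : ∀ j, 1 ≤ j → j ≤ k₁ → c₁' j ≤ e₁ j →
      ∃ i, 2 * i + 1 ≤ l' ∧ A' (2 * i) = c₁' j ∧ A' (2 * i + 1) - 1 = e₁ j)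
    (hrev₂' : ∀ j, 1 ≤ j → j ≤ k₂ → c₂' j ≤ e₂ j →
      ∃ i, 1 ≤ i ∧ 2 * i ≤ l' ∧ A' (2 * i - 1) = c₂' j ∧ A' (2 * i) - 1 = e₂ j) :
    l = l' ∧ ∀ i, i ≤ l → A i = A' i :=
  alternating_decomposition_unique_general a b l l' A A' k₁ k₂ e₁ c₁ c₁' e₂ c₂ c₂' he₁ he₂ hc₁m hc₂m
    hc₁m' hc₂m' hA0 hA'0 hAl hA'l hAmono hA'mono hAodd hAeven hA'odd hA'even hrev₁ hrev₂ hrev₁'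
    hrev₂'
end
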